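/- There is at most one σ ≥ 0 such that the regular solution v_σ satisfies v_σ(ζ) > 0 for all ζ ≥ 0 and v_σ(ζ) → 0 as ζ → +∞. -/

import Mathlib

open Filter Set

/-- A regular solution of the singular ODE
`-ζ·v'' - v'/(m-2) + B·ζ^{m/(m-2)}·v = σ·v` on `(0,∞)`:
continuously differentiable on `[0,∞)`, twice continuously differentiable on
`(0,∞)`, and normalized by `v 0 = 1`. -/
def RegSol (m B σ : ℝ) (v : ℝ → ℝ) : Prop :=
  ContDiffOn ℝ 1 v (Set.Ici 0) ∧
  ContDiffOn ℝ 2 v (Set.Ioi 0) ∧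
  (∀ ζ : ℝ, 0 < ζ →
    -ζ * deriv (deriv v) ζ - deriv v ζ / (m - 2)
      + B * ζ ^ (m / (m - 2)) * v ζ = σ * v ζ) ∧
  v 0 = 1

/-!
Multiplying by `ζ^(p-1)`, `p = 1/(m-2)`, puts the equation in Sturm–Liouville form
`(ζ^p v')' = ζ^(p-1) (b - σ) v`. For a positive solution decaying at infinity, the flux `ζ^p v'`
increases once `b > σ`, which forces `v' < 0` there. If `σ < σ'` both carry positive decaying
solutions `v`, `w`, their Wronskian `W = ζ^p (v w' - w v')` vanishes at `0` (as `p > 0`) and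
strictly decreases, so `W < 0`. But beyond a point `Z` with `b > σ'` we have
`W(ζ) ≥ v(ζ) ζ^p w'(ζ) ≥ v(ζ) Z^p w'(Z) → 0`, contradicting `W(ζ) ≤ W(Z) < 0`.
-/

open Topology

def SolvesODE (p : ℝ) (Q v : ℝ → ℝ) : Prop :=
  ContDiffOn ℝ 2 v (Ioi 0) ∧
  ∀ ζ : ℝ, 0 < ζ → ζ * deriv (deriv v) ζ + p * deriv v ζ = Q ζ * v ζ

noncomputable def wronskian (p : ℝ) (v w : ℝ → ℝ) (t : ℝ) : ℝ :=
  t ^ p * (v t * deriv w t - w t * deriv v t)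

lemma RegSol.solvesODE {m B σ : ℝ} {v : ℝ → ℝ} (hv : RegSol m B σ v) :
    SolvesODE (m - 2)⁻¹ (fun ζ => B * ζ ^ (m / (m - 2)) - σ) v :=
  ⟨hv.2.1, fun ζ hζ => by linear_combination -hv.2.2.1 ζ hζ⟩

namespace SolvesODE

variable {p : ℝ} {Q Q' v w : ℝ → ℝ}

lemma hasDerivAt (hv : SolvesODE p Q v) {ζ : ℝ} (hζ : 0 < ζ) :
    HasDerivAt v (deriv v ζ) ζ :=
  ((hv.1.contDiffAt (Ioi_mem_nhds hζ)).differentiableAt (by norm_num)).hasDerivAt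

lemma hasDerivAt_deriv (hv : SolvesODE p Q v) {ζ : ℝ} (hζ : 0 < ζ) :
    HasDerivAt (deriv v) (deriv (deriv v) ζ) ζ :=
  (((hv.1.deriv_of_isOpen (m := 1) isOpen_Ioi (by norm_num)).contDiffAt
    (Ioi_mem_nhds hζ)).differentiableAt one_ne_zero).hasDerivAt

lemma hasDerivAt_flux (hv : SolvesODE p Q v) {ζ : ℝ} (hζ : 0 < ζ) :
    HasDerivAt (fun t => t ^ p * deriv v t) (ζ ^ (p - 1) * (Q ζ * v ζ)) ζ := by
  refine ((Real.hasDerivAt_rpow_const (p := p) (Or.inl hζ.ne')).mul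
    (hv.hasDerivAt_deriv hζ)).congr_deriv ?_
  have hpow : ζ ^ p = ζ ^ (p - 1) * ζ := by rw [← Real.rpow_add_one hζ.ne', sub_add_cancel]
  rw [hpow]
  linear_combination ζ ^ (p - 1) * hv.2 ζ hζ

lemma strictMonoOn_flux (hv : SolvesODE p Q v) {Z : ℝ} (hZ : 0 < Z)
    (hQ : ∀ ζ, Z ≤ ζ → 0 < Q ζ) (hvpos : ∀ ζ, Z ≤ ζ → 0 < v ζ) :
    StrictMonoOn (fun t => t ^ p * deriv v t) (Ici Z) := by
  refine strictMonoOn_of_deriv_pos (convex_Ici Z)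
    (fun x hx => (hv.hasDerivAt_flux (hZ.trans_le hx)).continuousAt.continuousWithinAt)
    fun x hx => ?_
  rw [interior_Ici] at hx
  have hx0 : 0 < x := hZ.trans hx
  rw [(hv.hasDerivAt_flux hx0).deriv]
  have := hQ x hx.le
  have := hvpos x hx.le
  have := Real.rpow_pos_of_pos hx0 (p - 1)
  positivity

/-- Otherwise the increasing flux makes `v' > 0` from some point on, and `v` cannot tend to `0`. -/
lemma deriv_neg (hv : SolvesODE p Q v) {Z : ℝ} (hZ : 0 < Z)
    (hQ : ∀ ζ, Z ≤ ζ → 0 < Q ζ) (hvpos : ∀ ζ, Z ≤ ζ → 0 < v ζ)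
    (hvlim : Tendsto v atTop (𝓝 0)) {ζ₀ : ℝ} (hζ₀ : Z ≤ ζ₀) :
    deriv v ζ₀ < 0 := by
  by_contra! hζ₀v
  have hflux := hv.strictMonoOn_flux hZ hQ hvpos
  have hmono : StrictMonoOn v (Ici ζ₀) := by
    refine strictMonoOn_of_deriv_pos (convex_Ici ζ₀)
      (fun x hx => (hv.hasDerivAt (hZ.trans_le (hζ₀.trans hx))).continuousAt.continuousWithinAt)
      fun x hx => ?_
    rw [interior_Ici] at hx
    have hx0 : 0 < x := hZ.trans_le (hζ₀.trans hx.le)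
    have hflux_pos : 0 < x ^ p * deriv v x :=
      (mul_nonneg (Real.rpow_nonneg (hZ.le.trans hζ₀) _) hζ₀v).trans_lt
        (hflux hζ₀ (hζ₀.trans hx.le) hx)
    exact pos_of_mul_pos_right hflux_pos (Real.rpow_nonneg hx0.le p)
  have hle : v ζ₀ ≤ 0 :=
    ge_of_tendsto hvlim
      (eventually_atTop.2 ⟨ζ₀, fun x hx => hmono.monotoneOn self_mem_Ici hx hx⟩)
  exact (hvpos ζ₀ hζ₀).not_ge hle

lemma hasDerivAt_wronskian (hv : SolvesODE p Q v) (hw : SolvesODE p Q' w) {ζ : ℝ}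
    (hζ : 0 < ζ) :
    HasDerivAt (wronskian p v w) (ζ ^ (p - 1) * ((Q' ζ - Q ζ) * v ζ * w ζ)) ζ := by
  have hW : wronskian p v w = fun t => v t * (t ^ p * deriv w t) - w t * (t ^ p * deriv v t) := by
    ext t; simp only [wronskian]; ring
  rw [hW]
  exact (((hv.hasDerivAt hζ).mul (hw.hasDerivAt_flux hζ)).sub
    ((hw.hasDerivAt hζ).mul (hv.hasDerivAt_flux hζ))).congr_deriv (by ring)

lemma strictAntiOn_wronskian (hv : SolvesODE p Q v) (hw : SolvesODE p Q' w)
    (hQ : ∀ ζ, 0 < ζ → Q' ζ < Q ζ) (hvpos : ∀ ζ, 0 < ζ → 0 < v ζ)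
    (hwpos : ∀ ζ, 0 < ζ → 0 < w ζ) :
    StrictAntiOn (wronskian p v w) (Ioi 0) := by
  refine strictAntiOn_of_deriv_neg (convex_Ioi 0)
    (fun x hx => (hasDerivAt_wronskian hv hw hx).continuousAt.continuousWithinAt)
    fun x hx => ?_
  rw [interior_Ioi] at hx
  rw [(hasDerivAt_wronskian hv hw hx).deriv]
  have := mul_pos (mul_pos (Real.rpow_pos_of_pos hx (p - 1)) (hvpos x hx)) (hwpos x hx)
  nlinarith [hQ x hx]

end SolvesODE

lemma tendsto_wronskian_nhdsGT_zero {p : ℝ} (hp : 0 < p) {v w : ℝ → ℝ}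
    (hv : ContDiffOn ℝ 1 v (Ici 0)) (hw : ContDiffOn ℝ 1 w (Ici 0)) :
    Tendsto (wronskian p v w) (𝓝[>] 0) (𝓝 0) := by
  have hpow : Tendsto (fun t : ℝ => t ^ p) (𝓝[>] 0) (𝓝 0) := by
    simpa [Real.zero_rpow hp.ne'] using
      (Real.continuousAt_rpow_const 0 p (Or.inr hp.le)).tendsto.mono_left nhdsWithin_le_nhds
  have hderiv {u : ℝ → ℝ} (hu : ContDiffOn ℝ 1 u (Ici 0)) :
      ContinuousWithinAt (derivWithin u (Ici 0)) (Ici 0) 0 :=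
    hu.continuousOn_derivWithin (uniqueDiffOn_Ici 0) le_rfl 0 self_mem_Ici
  have hbracket := (((hv.continuousOn 0 self_mem_Ici).mul (hderiv hw)).sub
    ((hw.continuousOn 0 self_mem_Ici).mul (hderiv hv))).tendsto.mono_left
    (nhdsWithin_mono 0 Ioi_subset_Ici_self)
  have hprod := hpow.mul hbracket
  rw [zero_mul] at hprod
  refine hprod.congr' ?_
  filter_upwards [self_mem_nhdsWithin] with t ht
  have hmem : Ici (0 : ℝ) ∈ 𝓝 t := mem_of_superset (Ioi_mem_nhds ht) Ioi_subset_Ici_self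
  simp only [Pi.sub_apply, Pi.mul_apply, wronskian, derivWithin_of_mem_nhds hmem]

lemma StrictAntiOn.neg_of_tendsto_nhdsGT {f : ℝ → ℝ} {a : ℝ} (hf : StrictAntiOn f (Ioi a))
    (hlim : Tendsto f (𝓝[>] a) (𝓝 0)) {x : ℝ} (hx : a < x) : f x < 0 := by
  obtain ⟨y, hay, hyx⟩ := exists_between hx
  refine (hf hay hx hyx).trans_le (ge_of_tendsto hlim ?_)
  filter_upwards [Ioo_mem_nhdsGT hay] with t ht
  exact (hf ht.1 hay ht.2).le

def IsPositiveDecayingSol (m B σ : ℝ) (v : ℝ → ℝ) : Prop :=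
  RegSol m B σ v ∧ (∀ ζ : ℝ, 0 ≤ ζ → 0 < v ζ) ∧ Tendsto v atTop (𝓝 0)

lemma exists_pos_forall_lt_potential {m B : ℝ} (hm : 2 < m) (hB : 0 < B) (σ : ℝ) :
    ∃ Z : ℝ, 0 < Z ∧ ∀ ζ, Z ≤ ζ → σ < B * ζ ^ (m / (m - 2)) := by
  have hb : Tendsto (fun ζ : ℝ => B * ζ ^ (m / (m - 2))) atTop atTop :=
    (tendsto_rpow_atTop (div_pos (by linarith) (sub_pos.2 hm))).const_mul_atTop hB
  obtain ⟨Z, hZ⟩ := eventually_atTop.1 ((eventually_gt_atTop 0).and (hb.eventually_gt_atTop σ))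
  exact ⟨Z, (hZ Z le_rfl).1, fun ζ hζ => (hZ ζ hζ).2⟩

lemma IsPositiveDecayingSol.not_lt {m B σ σ' : ℝ} (hm : 2 < m) (hB : 0 < B) {v w : ℝ → ℝ}
    (hv : IsPositiveDecayingSol m B σ v) (hw : IsPositiveDecayingSol m B σ' w) : ¬σ < σ' := by
  intro hσ
  obtain ⟨hvreg, hvpos, hvlim⟩ := hv
  obtain ⟨hwreg, hwpos, -⟩ := hw
  have hp : 0 < (m - 2)⁻¹ := inv_pos.2 (sub_pos.2 hm)
  obtain ⟨Z, hZ, hbZ⟩ := exists_pos_forall_lt_potential hm hB σ'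
  have hvneg : ∀ ζ, Z ≤ ζ → deriv v ζ < 0 := fun ζ hζ =>
    hvreg.solvesODE.deriv_neg hZ (fun ζ hζ => sub_pos.2 (hσ.trans (hbZ ζ hζ)))
      (fun ζ hζ => hvpos ζ (hZ.le.trans hζ)) hvlim hζ
  have hwflux := hwreg.solvesODE.strictMonoOn_flux hZ (fun ζ hζ => sub_pos.2 (hbZ ζ hζ))
    (fun ζ hζ => hwpos ζ (hZ.le.trans hζ))
  have hanti := hvreg.solvesODE.strictAntiOn_wronskian hwreg.solvesODE
    (fun ζ _ => by linarith) (fun ζ hζ => hvpos ζ hζ.le) (fun ζ hζ => hwpos ζ hζ.le)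
  have hWZ : wronskian (m - 2)⁻¹ v w Z < 0 :=
    hanti.neg_of_tendsto_nhdsGT (tendsto_wronskian_nhdsGT_zero hp hvreg.1 hwreg.1) hZ
  have hbound : ∀ ζ, Z ≤ ζ →
      -wronskian (m - 2)⁻¹ v w Z ≤ -(Z ^ (m - 2)⁻¹ * deriv w Z) * v ζ := by
    intro ζ hζ
    have hζ0 : 0 < ζ := hZ.trans_le hζ
    have hW := hanti.antitoneOn (mem_Ioi.2 hZ) (mem_Ioi.2 hζ0) hζ
    have hvflux : w ζ * (ζ ^ (m - 2)⁻¹ * deriv v ζ) < 0 :=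
      mul_neg_of_pos_of_neg (hwpos ζ hζ0.le)
        (mul_neg_of_pos_of_neg (Real.rpow_pos_of_pos hζ0 _) (hvneg ζ hζ))
    have hwflux' := mul_le_mul_of_nonneg_left (hwflux.monotoneOn self_mem_Ici hζ hζ)
      (hvpos ζ hζ0.le).le
    have hWζ : wronskian (m - 2)⁻¹ v w ζ =
        v ζ * (ζ ^ (m - 2)⁻¹ * deriv w ζ) - w ζ * (ζ ^ (m - 2)⁻¹ * deriv v ζ) := by
      simp only [wronskian]; ring
    linarith
  have hlim : Tendsto (fun ζ => -(Z ^ (m - 2)⁻¹ * deriv w Z) * v ζ) atTop (𝓝 0) := by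
    simpa using hvlim.const_mul (-(Z ^ (m - 2)⁻¹ * deriv w Z))
  linarith [ge_of_tendsto hlim (eventually_atTop.2 ⟨Z, hbound⟩)]

theorem stmt13 (m B : ℝ) (hm : 3 < m) (hB : 0 < B) :
    ∀ σ σ' : ℝ, 0 ≤ σ → 0 ≤ σ' →
      (∃ v : ℝ → ℝ, RegSol m B σ v ∧ (∀ ζ : ℝ, 0 ≤ ζ → 0 < v ζ) ∧
        Filter.Tendsto v Filter.atTop (nhds 0)) →
      (∃ v : ℝ → ℝ, RegSol m B σ' v ∧ (∀ ζ : ℝ, 0 ≤ ζ → 0 < v ζ) ∧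
        Filter.Tendsto v Filter.atTop (nhds 0)) →
      σ = σ' := by
  rintro σ σ' - - ⟨v, hv⟩ ⟨w, hw⟩
  have hm2 : 2 < m := by linarith
  exact le_antisymm (not_lt.1 (IsPositiveDecayingSol.not_lt hm2 hB hw hv))
    (not_lt.1 (IsPositiveDecayingSol.not_lt hm2 hB hv hw))
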